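/- (Renewal probabilities are dominated by reach probabilities, combinatorial form) Fix sequences λ with λ_i ≥ 0 and ρ with ρ_i ≥ 0. Then for every integer k ≥ 2, C_k ≤ Σ_{ℓ=2}^{k} q_ℓ^{(k)}, where C_k is the weighted Catalan number. -/

import Mathlib

open Filter Finset

/-- Final height of a `±1` path started at height `j`; `true` is a rise step,
`false` is a fall step. -/
def endH : ℕ → List Bool → ℕ
  | j, [] => j
  | j, true :: s => endH (j + 1) s
  | j, false :: s => endH (j - 1) s

/-- `isDyck j s` holds when the path `s` started at height `j` never goes below height 0
(every fall step occurs from height ≥ 1). -/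
def isDyck : ℕ → List Bool → Bool
  | _, [] => true
  | j, true :: s => isDyck (j + 1) s
  | j, false :: s => decide (1 ≤ j) && isDyck (j - 1) s

/-- `isJump j s` holds when the path `s` started at height `j` stays at height ≥ 1
(every fall step occurs from height ≥ 2). -/
def isJump : ℕ → List Bool → Bool
  | _, [] => true
  | j, true :: s => isJump (j + 1) s
  | j, false :: s => decide (2 ≤ j) && isJump (j - 1) s

/-- Weight of a lattice path: a rise step from height `j` has weight `u j`, a fall step
from height `j+1` to `j` has weight `v j`. -/
noncomputable def dwt (u v : ℕ → ℝ) : ℕ → List Bool → ℝ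
  | _, [] => 1
  | j, true :: s => u j * dwt u v (j + 1) s
  | j, false :: s => v (j - 1) * dwt u v (j - 1) s

/-- Weight `p(γ)` of a jump-chain path: an up-step from height `j` has weight
`λ_j/(1+λ_j+D_j)`, a down-step from height `j` has weight `1/(1+λ_j+D_j)`. -/
noncomputable def jwt (lam Dd : ℕ → ℝ) : ℕ → List Bool → ℝ
  | _, [] => 1
  | j, true :: s => lam j / (1 + lam j + Dd j) * jwt lam Dd (j + 1) s
  | j, false :: s => 1 / (1 + lam j + Dd j) * jwt lam Dd (j - 1) s

/-- `D_j = Σ_{i=1}^j ρ_i`. -/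
noncomputable def Dd (rho : ℕ → ℝ) (j : ℕ) : ℝ := ∑ i ∈ Finset.Icc 1 j, rho i

/-- `u(j) = λ_{j+1}/(1+λ_{j+1}+D_{j+1})`. -/
noncomputable def uWt (lam rho : ℕ → ℝ) (j : ℕ) : ℝ :=
  lam (j + 1) / (1 + lam (j + 1) + Dd rho (j + 1))

/-- `v(j) = 1/(1+λ_{j+2}+D_{j+2})`. -/
noncomputable def vWt (lam rho : ℕ → ℝ) (j : ℕ) : ℝ :=
  1 / (1 + lam (j + 2) + Dd rho (j + 2))

/-- The weighted Catalan number `C_k`: the sum of `ω(γ)` over all Dyck paths `γ` of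
length `2k` (paths of `k` rise and `k` fall steps from height 0 staying at height ≥ 0). -/
noncomputable def Ck (lam rho : ℕ → ℝ) (k : ℕ) : ℝ :=
  ∑ γ : Fin (2 * k) → Bool,
    if isDyck 0 (List.ofFn γ) = true ∧ endH 0 (List.ofFn γ) = 0 then
      dwt (uWt lam rho) (vWt lam rho) 0 (List.ofFn γ)
    else 0

/-- The power series `Σ_k C_k z^k` as a formal multilinear series over `ℂ`. -/
noncomputable def gSeries (lam rho : ℕ → ℝ) : FormalMultilinearSeries ℂ ℂ ℂ :=
  fun n => FormalMultilinearSeries.ofScalars ℂ (fun k => (Ck lam rho k : ℂ)) n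

/-- `M`, the radius of convergence of `g(z) = Σ_k C_k z^k`. -/
noncomputable def radiusM (lam rho : ℕ → ℝ) : ENNReal := (gSeries lam rho).radius

/-- `σ(ℓ) = ∏_{n=1}^ℓ 1/(1+D_n)`. -/
noncomputable def sigmaWt (rho : ℕ → ℝ) (l : ℕ) : ℝ :=
  ∏ n ∈ Finset.Icc 1 l, 1 / (1 + Dd rho n)

/-- `q_ℓ^{(k)} = Σ_{γ ∈ Γ_ℓ^{(k)}} p(γ) σ(ℓ)`, where `Γ_ℓ^{(k)}` is the set of jump-chain
paths of length `2k − ℓ − 1` that start at height 1, stay at height ≥ 1, and whose final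
step is an up-step ending at height `ℓ`. -/
noncomputable def qsum (lam rho : ℕ → ℝ) (k l : ℕ) : ℝ :=
  (∑ γ : Fin (2 * k - l - 1) → Bool,
    if isJump 1 (List.ofFn γ) = true ∧ endH 1 (List.ofFn γ) = l ∧
        (List.ofFn γ).getLast? = some true then
      jwt lam (Dd rho) 1 (List.ofFn γ)
    else 0) * sigmaWt rho l

/-- `Γ_ℓ^{(k)}`, as a set of step lists. -/
def Gamma (k l : ℕ) : Set (List Bool) :=
  {s | s.length = 2 * k - l - 1 ∧ isJump 1 s = true ∧ endH 1 s = l ∧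
    s.getLast? = some true}

/-- The path modification `γ ↦ γ̃`: insert `ℓ − 2` consecutive down-steps immediately
before the final (upward) step. -/
def tilde (l : ℕ) (s : List Bool) : List Bool :=
  s.dropLast ++ List.replicate (l - 2) false ++ [true]


/-!
Shifting heights by one turns Dyck paths from `0` into jump-chain paths from `1` that stay at
height `≥ 1`, with the same weights, so `C_k` is the total weight `p` of the jump-chain paths of
length `2k` from `1` back to `1`. Along such a path the excess `(steps left) − (height)` starts at
`2k − 1`, is unchanged by a down-step and drops by `2` at an up-step. Cutting the path at the
up-step where the excess first reaches `1`, at some height `ℓ ≤ k`, splits it into a path of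
`Γ_ℓ^{(k)}` and a path of length `ℓ + 1` from `ℓ` down to `1`. The total weight of the latter is
at most `σ(ℓ)`, by induction on `ℓ` through its first step and the identity
`λ/(1+λ+D) · 1/(1+D) + 1/(1+λ+D) = 1/(1+D)`.
-/

theorem Fintype.sum_ofFn_succ {α M : Type*} [Fintype α] [AddCommMonoid M] (F : List α → M)
    (n : ℕ) :
    ∑ γ : Fin (n + 1) → α, F (List.ofFn γ) = ∑ a, ∑ γ : Fin n → α, F (a :: List.ofFn γ) := by
  rw [← Fintype.sum_prod_type', ← (Fin.consEquiv fun _ => α).sum_comp]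
  simp [List.ofFn_succ]

theorem Fintype.sum_ofFn_succ' {α M : Type*} [Fintype α] [AddCommMonoid M] (F : List α → M)
    (n : ℕ) :
    ∑ γ : Fin (n + 1) → α, F (List.ofFn γ) = ∑ a, ∑ γ : Fin n → α, F (List.ofFn γ ++ [a]) := by
  rw [← Fintype.sum_prod_type', ← (Fin.snocEquiv fun _ => α).sum_comp]
  simp only [Fin.snocEquiv, Equiv.coe_fn_mk, List.ofFn_succ', Fin.snoc_castSucc, Fin.snoc_last,
    List.concat_eq_append]

theorem endH_append (j : ℕ) (s t : List Bool) : endH j (s ++ t) = endH (endH j s) t := by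
  induction s generalizing j with
  | nil => rfl
  | cons b s ih => cases b <;> simp [endH, ih]

theorem isJump_append (j : ℕ) (s t : List Bool) :
    isJump j (s ++ t) = (isJump j s && isJump (endH j s) t) := by
  induction s generalizing j with
  | nil => rfl
  | cons b s ih => cases b <;> simp [isJump, endH, ih, Bool.and_assoc]

theorem jwt_append (lam D : ℕ → ℝ) (j : ℕ) (s t : List Bool) :
    jwt lam D j (s ++ t) = jwt lam D j s * jwt lam D (endH j s) t := by
  induction s generalizing j with
  | nil => simp [jwt, endH]
  | cons b s ih => cases b <;> simp [jwt, endH, ih, mul_assoc]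

theorem isDyck_eq_isJump (j : ℕ) (s : List Bool) : isDyck j s = isJump (j + 1) s := by
  induction s generalizing j with
  | nil => rfl
  | cons b s ih =>
    cases b
    · rcases j with _ | j <;> simp [isDyck, isJump, ih]
    · simp [isDyck, isJump, ih]

theorem endH_succ_of_isDyck {j : ℕ} {s : List Bool} (hs : isDyck j s = true) :
    endH (j + 1) s = endH j s + 1 := by
  induction s generalizing j with
  | nil => rfl
  | cons b s ih =>
    cases b
    · simp only [isDyck, Bool.and_eq_true, decide_eq_true_eq] at hs
      simp only [endH, ← ih hs.2, show j + 1 - 1 = j - 1 + 1 by omega]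
    · exact ih hs

theorem dwt_eq_jwt_of_isDyck (lam rho : ℕ → ℝ) {j : ℕ} {s : List Bool}
    (hs : isDyck j s = true) :
    dwt (uWt lam rho) (vWt lam rho) j s = jwt lam (Dd rho) (j + 1) s := by
  induction s generalizing j with
  | nil => rfl
  | cons b s ih =>
    cases b
    · simp only [isDyck, Bool.and_eq_true, decide_eq_true_eq] at hs
      simp only [dwt, jwt, vWt, ih hs.2, show j - 1 + 2 = j + 1 by omega,
        show j + 1 - 1 = j - 1 + 1 by omega]
    · simp only [dwt, jwt, uWt, ih hs]

section Weights

variable {rho : ℕ → ℝ}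

theorem Dd_nonneg (hrho : ∀ i, 1 ≤ i → 0 ≤ rho i) (j : ℕ) : 0 ≤ Dd rho j :=
  sum_nonneg fun i hi => hrho i (mem_Icc.mp hi).1

theorem Dd_succ (j : ℕ) : Dd rho (j + 1) = Dd rho j + rho (j + 1) :=
  sum_Icc_succ_top (by omega) rho

theorem one_add_Dd_pos (hrho : ∀ i, 1 ≤ i → 0 ≤ rho i) (j : ℕ) : 0 < 1 + Dd rho j := by
  linarith [Dd_nonneg hrho j]

theorem sigmaWt_succ (l : ℕ) :
    sigmaWt rho (l + 1) = sigmaWt rho l / (1 + Dd rho (l + 1)) := by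
  rw [sigmaWt, prod_Icc_succ_top (by omega), ← sigmaWt, mul_one_div]

theorem sigmaWt_nonneg (hrho : ∀ i, 1 ≤ i → 0 ≤ rho i) (l : ℕ) : 0 ≤ sigmaWt rho l :=
  prod_nonneg fun n _ => one_div_nonneg.mpr (one_add_Dd_pos hrho n).le

end Weights

namespace JumpChain

variable (lam D : ℕ → ℝ)

noncomputable def upProb (j : ℕ) : ℝ := lam j / (1 + lam j + D j)

noncomputable def downProb (j : ℕ) : ℝ := 1 / (1 + lam j + D j)

noncomputable def reach (j m h : ℕ) : ℝ :=
  ∑ γ : Fin m → Bool,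
    if isJump j (List.ofFn γ) = true ∧ endH j (List.ofFn γ) = h then
      jwt lam D j (List.ofFn γ)
    else 0

variable {lam D}

theorem upProb_nonneg {j : ℕ} (hlam : 0 ≤ lam j) (hD : 0 ≤ D j) : 0 ≤ upProb lam D j :=
  div_nonneg hlam (by linarith)

theorem downProb_nonneg {j : ℕ} (hlam : 0 ≤ lam j) (hD : 0 ≤ D j) : 0 ≤ downProb lam D j :=
  one_div_nonneg.mpr (by linarith)

theorem upProb_div_add_downProb {j : ℕ} (hlam : 0 ≤ lam j) (hD : 0 ≤ D j) :
    upProb lam D j / (1 + D j) + downProb lam D j = 1 / (1 + D j) := by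
  have : 1 + lam j + D j ≠ 0 := by linarith
  have : 1 + D j ≠ 0 := by linarith
  rw [upProb, downProb]
  field_simp
  ring

theorem reach_zero (j h : ℕ) : reach lam D j 0 h = if j = h then 1 else 0 := by
  simp [reach, isJump, endH, jwt]

theorem reach_succ (j m h : ℕ) :
    reach lam D j (m + 1) h = upProb lam D j * reach lam D (j + 1) m h +
      if 2 ≤ j then downProb lam D j * reach lam D (j - 1) m h else 0 := by
  rw [reach, Fintype.sum_ofFn_succ
    (fun s => if isJump j s = true ∧ endH j s = h then jwt lam D j s else 0), Fintype.sum_bool]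
  -- `rfl` closes what is left: the two sides differ only in their `Decidable` instances
  by_cases hj : 2 ≤ j <;>
    simp [hj, isJump, endH, jwt, reach, upProb, downProb, Finset.mul_sum] <;> rfl

theorem reach_eq_zero_of_far {j m h : ℕ} (hfar : j + m < h ∨ h + m < j) :
    reach lam D j m h = 0 := by
  induction m generalizing j with
  | zero => rw [reach_zero, if_neg (by omega)]
  | succ m ih =>
    rw [reach_succ, ih (by omega)]
    split_ifs
    · rw [ih (by omega)]; ring
    · ring

theorem reach_nonneg (hlam : ∀ i, 1 ≤ i → 0 ≤ lam i) (hD : ∀ i, 0 ≤ D i) {j : ℕ}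
    (hj : 1 ≤ j) (m h : ℕ) : 0 ≤ reach lam D j m h := by
  induction m generalizing j with
  | zero => rw [reach_zero]; split_ifs <;> norm_num
  | succ m ih =>
    rw [reach_succ]
    refine add_nonneg (mul_nonneg (upProb_nonneg (hlam j hj) (hD j)) (ih (by omega))) ?_
    split_ifs
    · exact mul_nonneg (downProb_nonneg (hlam j hj) (hD j)) (ih (by omega))
    · exact le_rfl

theorem sum_reach_succ_mul (j : ℕ) (s : Finset ℕ) (a b : ℕ → ℕ) (w : ℕ → ℝ) :
    ∑ l ∈ s, reach lam D j (a l + 1) (b l) * w l =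
      upProb lam D j * ∑ l ∈ s, reach lam D (j + 1) (a l) (b l) * w l +
        if 2 ≤ j then downProb lam D j * ∑ l ∈ s, reach lam D (j - 1) (a l) (b l) * w l
        else 0 := by
  simp only [reach_succ, add_mul, sum_add_distrib, mul_sum, mul_assoc]
  split_ifs <;> simp [mul_assoc]

theorem reach_one_eq_sum {j m : ℕ} (hj : 1 ≤ j) (hm : j + 3 ≤ m) (hodd : Odd (m + j)) :
    reach lam D j m 1 = ∑ l ∈ Icc 2 (m - 2),
      reach lam D j (m - 2 - l) (l - 1) * upProb lam D (l - 1) * reach lam D l (l + 1) 1 := by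
  induction m generalizing j with
  | zero => omega
  | succ m ih =>
    have hpar : (m + j) % 2 = 0 := by rcases hodd with ⟨c, hc⟩; omega
    set w : ℕ → ℝ := fun l ↦ upProb lam D (l - 1) * reach lam D l (l + 1) 1
    set S : ℕ → ℝ := fun i ↦ ∑ l ∈ Icc 2 (m - 2), reach lam D i (m - 2 - l) (l - 1) * w l
    have ih' {i : ℕ} (hi : 1 ≤ i) (him : i + 3 ≤ m) (hodd : (m + i) % 2 = 1) :
        reach lam D i m 1 = S i := by
      simp only [S, w, ← mul_assoc]
      exact ih hi him (Nat.odd_iff.mpr hodd)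
    have hpeel : ∑ l ∈ Icc 2 (m + 1 - 2),
          reach lam D j (m + 1 - 2 - l) (l - 1) * upProb lam D (l - 1) * reach lam D l (l + 1) 1 =
        reach lam D j 0 (m - 2) * w (m - 2 + 1) + ∑ l ∈ Icc 2 (m - 2),
          reach lam D j (m - 2 - l + 1) (l - 1) * w l := by
      rw [show m + 1 - 2 = m - 2 + 1 by omega, sum_Icc_succ_top (by omega), add_comm]
      refine congrArg₂ _ (by simp [w, mul_assoc]) (sum_congr rfl fun l hl => ?_)
      rw [mem_Icc] at hl
      rw [show m - 2 + 1 - l = m - 2 - l + 1 by omega, mul_assoc]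
    have hup : upProb lam D j * reach lam D (j + 1) m 1 =
        reach lam D j 0 (m - 2) * w (m - 2 + 1) + upProb lam D j * S (j + 1) := by
      rcases (show j + 2 = m ∨ j + 4 ≤ m by omega) with rfl | hm'
      · -- the first step, an up-step, already lowers the excess to `1`
        have hS : S (j + 1) = 0 := sum_eq_zero fun l hl => by
          rw [mem_Icc] at hl
          rw [reach_eq_zero_of_far (by omega), zero_mul]
        simp [hS, reach_zero, w]
      · rw [reach_zero, if_neg (by omega), ih' (by omega) hm' (by omega)]
        ring
    have hdown : (if 2 ≤ j then downProb lam D j * reach lam D (j - 1) m 1 else 0) =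
        if 2 ≤ j then downProb lam D j * S (j - 1) else 0 := by
      split_ifs
      · rw [ih' (by omega) (by omega) (by omega)]
      · rfl
    rw [reach_succ, hpeel, sum_reach_succ_mul, hup, hdown]
    ring

theorem Ck_eq_reach (lam rho : ℕ → ℝ) (k : ℕ) :
    Ck lam rho k = reach lam (Dd rho) 1 (2 * k) 1 := by
  refine sum_congr rfl fun γ _ => ?_
  by_cases hs : isDyck 0 (List.ofFn γ) = true
  · simp [← isDyck_eq_isJump, hs, endH_succ_of_isDyck hs, dwt_eq_jwt_of_isDyck lam rho hs]
  · simp [← isDyck_eq_isJump, hs]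

theorem sum_lastUp_eq_reach_mul (lam D : ℕ → ℝ) (j n h : ℕ) :
    (∑ γ : Fin (n + 1) → Bool,
      if isJump j (List.ofFn γ) = true ∧ endH j (List.ofFn γ) = h + 1 ∧
          (List.ofFn γ).getLast? = some true then
        jwt lam D j (List.ofFn γ)
      else 0) = reach lam D j n h * upProb lam D h := by
  rw [Fintype.sum_ofFn_succ' (fun s => if isJump j s = true ∧ endH j s = h + 1 ∧
      s.getLast? = some true then jwt lam D j s else 0), Fintype.sum_bool, reach, sum_mul]
  simp [isJump_append, endH_append, jwt_append, isJump, endH, jwt, upProb]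
  refine sum_congr rfl fun γ _ => ?_
  split_ifs with hγ
  · rw [hγ.2]
  · rfl

theorem qsum_eq_reach_mul (lam rho : ℕ → ℝ) {k l : ℕ} (hl : 2 ≤ l) (hlk : l + 2 ≤ 2 * k) :
    qsum lam rho k l = reach lam (Dd rho) 1 (2 * k - 2 - l) (l - 1) *
      upProb lam (Dd rho) (l - 1) * sigmaWt rho l := by
  obtain ⟨h, rfl⟩ : ∃ h, l = h + 1 := ⟨l - 1, by omega⟩
  rw [qsum, show 2 * k - (h + 1) - 1 = 2 * k - 2 - (h + 1) + 1 by omega,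
    sum_lastUp_eq_reach_mul, Nat.add_sub_cancel]

variable {rho : ℕ → ℝ}

theorem reach_descent_le_sigmaWt (hlam : ∀ i, 1 ≤ i → 0 ≤ lam i)
    (hrho : ∀ i, 1 ≤ i → 0 ≤ rho i) (l : ℕ) :
    reach lam (Dd rho) (l + 1) l 1 ≤ sigmaWt rho l := by
  induction l with
  | zero => simp [reach_zero, sigmaWt]
  | succ l ih =>
    have hstep : downProb lam (Dd rho) (l + 2) ≤ 1 / (1 + Dd rho (l + 1)) := by
      rw [downProb, Dd_succ]
      apply one_div_le_one_div_of_le (one_add_Dd_pos hrho (l + 1))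
      linarith [hlam (l + 2) (by omega), hrho (l + 2) (by omega)]
    rw [reach_succ, reach_eq_zero_of_far (by omega), mul_zero, zero_add, if_pos (by omega),
      sigmaWt_succ, ← one_div_mul_eq_div]
    exact mul_le_mul hstep ih (reach_nonneg hlam (Dd_nonneg hrho) (by omega) _ _)
      (one_div_nonneg.mpr (one_add_Dd_pos hrho _).le)

theorem reach_le_sigmaWt (hlam : ∀ i, 1 ≤ i → 0 ≤ lam i) (hrho : ∀ i, 1 ≤ i → 0 ≤ rho i)
    {l : ℕ} (hl : 1 ≤ l) : reach lam (Dd rho) l (l + 1) 1 ≤ sigmaWt rho l := by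
  induction l with
  | zero => omega
  | succ l ih =>
    have hlam' := hlam (l + 1) (by omega)
    have hD := Dd_nonneg hrho (l + 1)
    have hdown : (if 2 ≤ l + 1 then
          downProb lam (Dd rho) (l + 1) * reach lam (Dd rho) (l + 1 - 1) (l + 1) 1 else 0) ≤
        downProb lam (Dd rho) (l + 1) * sigmaWt rho l := by
      split_ifs
      · exact mul_le_mul_of_nonneg_left (ih (by omega)) (downProb_nonneg hlam' hD)
      · exact mul_nonneg (downProb_nonneg hlam' hD) (sigmaWt_nonneg hrho l)
    calc reach lam (Dd rho) (l + 1) (l + 1 + 1) 1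
        ≤ upProb lam (Dd rho) (l + 1) * sigmaWt rho (l + 1) +
            downProb lam (Dd rho) (l + 1) * sigmaWt rho l := by
          rw [reach_succ]
          exact add_le_add (mul_le_mul_of_nonneg_left
            (reach_descent_le_sigmaWt hlam hrho (l + 1)) (upProb_nonneg hlam' hD)) hdown
      _ = sigmaWt rho (l + 1) := by
          rw [sigmaWt_succ]
          linear_combination sigmaWt rho l * upProb_div_add_downProb hlam' hD

end JumpChain

/-- **Renewal probabilities are dominated by reach probabilities (combinatorial form).**
For every `k ≥ 2`, `C_k ≤ Σ_{ℓ=2}^{k} q_ℓ^{(k)}`. -/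
theorem catalan_le_reach (lam rho : ℕ → ℝ)
    (hlam : ∀ i, 1 ≤ i → 0 ≤ lam i) (hrho : ∀ i, 1 ≤ i → 0 ≤ rho i)
    (k : ℕ) (hk : 2 ≤ k) :
    Ck lam rho k ≤ ∑ l ∈ Finset.Icc 2 k, qsum lam rho k l := by
  open JumpChain in
  calc Ck lam rho k = reach lam (Dd rho) 1 (2 * k) 1 := Ck_eq_reach lam rho k
    _ = ∑ l ∈ Icc 2 (2 * k - 2), reach lam (Dd rho) 1 (2 * k - 2 - l) (l - 1) *
          upProb lam (Dd rho) (l - 1) * reach lam (Dd rho) l (l + 1) 1 :=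
        reach_one_eq_sum le_rfl (by omega) ⟨k, rfl⟩
    _ = ∑ l ∈ Icc 2 k, reach lam (Dd rho) 1 (2 * k - 2 - l) (l - 1) *
          upProb lam (Dd rho) (l - 1) * reach lam (Dd rho) l (l + 1) 1 := by
        refine (sum_subset (Icc_subset_Icc le_rfl (by omega)) fun l hl hlk => ?_).symm
        rw [mem_Icc] at hl hlk
        rw [reach_eq_zero_of_far (by omega), zero_mul, zero_mul]
    _ ≤ ∑ l ∈ Icc 2 k, reach lam (Dd rho) 1 (2 * k - 2 - l) (l - 1) *
          upProb lam (Dd rho) (l - 1) * sigmaWt rho l := by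
        refine sum_le_sum fun l hl => ?_
        rw [mem_Icc] at hl
        exact mul_le_mul_of_nonneg_left (reach_le_sigmaWt hlam hrho (by omega))
          (mul_nonneg (reach_nonneg hlam (Dd_nonneg hrho) le_rfl _ _)
            (upProb_nonneg (hlam _ (by omega)) (Dd_nonneg hrho _)))
    _ = ∑ l ∈ Icc 2 k, qsum lam rho k l := by
        refine sum_congr rfl fun l hl => (qsum_eq_reach_mul lam rho ?_ ?_).symm <;>
          · rw [mem_Icc] at hl; omega
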